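/- Let V be a Hilbert space, K ⊆ V a finite-dimensional subspace, and H ⊆ V a closed subspace with H ∩ K = {0}. Let P denote the orthogonal projection of V onto the orthogonal complement K^⊥. Then there exists a constant c' > 0 such that ||w|| ≤ c'·||P(w)|| for all w ∈ H. -/

import Mathlib

/-- If K is a finite-dimensional subspace of a Hilbert space V, H a closed subspace with
H ∩ K = {0}, and P the orthogonal projection onto K^⊥ (i.e. P w = w − proj_K w), then
there is c' > 0 with ‖w‖ ≤ c'‖P w‖ for all w ∈ H. -/
theorem stmt_10 {V : Type*} [NormedAddCommGroup V] [InnerProductSpace ℂ V]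
    [CompleteSpace V] (K H : Submodule ℂ V) [FiniteDimensional ℂ K]
    (hH : IsClosed (H : Set V)) (hHK : H ⊓ K = ⊥) :
    ∃ c' : ℝ, 0 < c' ∧ ∀ w ∈ H, ‖w‖ ≤ c' * ‖w - (K.orthogonalProjection w : V)‖ := by
  by_contra hcon
  push_neg at hcon
  have hchoice : ∀ n : ℕ, ∃ w, w ∈ H ∧
      ((n : ℝ) + 1) * ‖w - (K.orthogonalProjection w : V)‖ < ‖w‖ := by
    intro n
    obtain ⟨w, hwH, hw⟩ := hcon ((n : ℝ) + 1) (by positivity)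
    exact ⟨w, hwH, hw⟩
  choose w hwH hw using hchoice
  have hwpos : ∀ n, 0 < ‖w n‖ := fun n =>
    lt_of_le_of_lt (by positivity) (hw n)
  -- normalized sequence
  set u : ℕ → V := fun n => ((‖w n‖⁻¹ : ℝ) : ℂ) • w n with hu_def
  have huH : ∀ n, u n ∈ H := fun n => H.smul_mem _ (hwH n)
  have hu1 : ∀ n, ‖u n‖ = 1 := by
    intro n
    simp [hu_def, norm_smul, abs_of_pos (inv_pos.2 (hwpos n)),
      inv_mul_cancel₀ (hwpos n).ne']
  -- residual bound
  have hPu : ∀ n, ‖u n - (K.orthogonalProjection (u n) : V)‖ ≤ 1 / ((n : ℝ) + 1) := by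
    intro n
    have hproj : (K.orthogonalProjection (u n) : V)
        = ((‖w n‖⁻¹ : ℝ) : ℂ) • (K.orthogonalProjection (w n) : V) := by
      simp [hu_def, map_smul]
    have : u n - (K.orthogonalProjection (u n) : V)
        = ((‖w n‖⁻¹ : ℝ) : ℂ) • (w n - (K.orthogonalProjection (w n) : V)) := by
      rw [hproj, hu_def, ← smul_sub]
    rw [this, norm_smul]
    have hlt : ‖w n - (K.orthogonalProjection (w n) : V)‖ < ‖w n‖ / ((n : ℝ) + 1) := by
      rw [lt_div_iff₀ (by positivity)]
      linarith [hw n]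
    have h1 : ‖(((‖w n‖⁻¹ : ℝ) : ℂ))‖ = ‖w n‖⁻¹ := by
      simp [abs_of_pos (inv_pos.2 (hwpos n))]
    rw [h1]
    calc ‖w n‖⁻¹ * ‖w n - (K.orthogonalProjection (w n) : V)‖
        ≤ ‖w n‖⁻¹ * (‖w n‖ / ((n : ℝ) + 1)) := by
          exact mul_le_mul_of_nonneg_left hlt.le (by positivity)
      _ = 1 / ((n : ℝ) + 1) := by
          field_simp [(hwpos n).ne']
  -- projections land in the compact unit ball of K
  haveI : ProperSpace K := FiniteDimensional.proper ℂ K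
  set k : ℕ → K := fun n => K.orthogonalProjection (u n) with hk_def
  have hkmem : ∀ n, k n ∈ Metric.closedBall (0 : K) 1 := by
    intro n
    rw [Metric.mem_closedBall, dist_zero_right]
    calc ‖k n‖ ≤ ‖K.orthogonalProjection‖ * ‖u n‖ :=
          (K.orthogonalProjection).le_opNorm (u n)
      _ ≤ 1 * 1 := by
          exact mul_le_mul (Submodule.orthogonalProjectionOnto_norm_le K) (le_of_eq (hu1 n))
            (norm_nonneg _) zero_le_one
      _ = 1 := one_mul 1
  obtain ⟨l, _, φ, hφ, hkl⟩ :=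
    (isCompact_closedBall (0 : K) 1).tendsto_subseq hkmem
  -- u (φ j) converges to l
  have hres : Filter.Tendsto (fun n => u n - (k n : V)) Filter.atTop (nhds 0) := by
    apply squeeze_zero_norm (fun n => hPu n)
    exact tendsto_one_div_add_atTop_nhds_zero_nat
  have hres' : Filter.Tendsto (fun j => u (φ j) - (k (φ j) : V)) Filter.atTop (nhds 0) :=
    hres.comp hφ.tendsto_atTop
  have hkl' : Filter.Tendsto (fun j => (k (φ j) : V)) Filter.atTop (nhds (l : V)) :=
    (continuous_subtype_val.tendsto l).comp hkl
  have hu_tend : Filter.Tendsto (fun j => u (φ j)) Filter.atTop (nhds (l : V)) := by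
    have := hres'.add hkl'
    simpa using this
  -- the limit is in H, in K, has norm 1: contradiction
  have hlH : (l : V) ∈ H :=
    hH.mem_of_tendsto hu_tend (Filter.Eventually.of_forall fun j => huH (φ j))
  have hlnorm : ‖(l : V)‖ = 1 := by
    have h1 : Filter.Tendsto (fun j => ‖u (φ j)‖) Filter.atTop (nhds ‖(l : V)‖) :=
      hu_tend.norm
    have h2 : Filter.Tendsto (fun j => ‖u (φ j)‖) Filter.atTop (nhds 1) := by
      simp only [hu1]
      exact tendsto_const_nhds
    exact tendsto_nhds_unique h1 h2
  have hlHK : (l : V) ∈ H ⊓ K := ⟨hlH, l.2⟩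
  rw [hHK, Submodule.mem_bot] at hlHK
  rw [hlHK] at hlnorm
  simp at hlnorm
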